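/- Let D be a finite domain and let P be a nonempty property of Boolean functions f : D → {0,1}. For every k ≥ 1, q ≥ 1 and ε ∈ (0,1], if P has a (k,q)-round-adaptive ε-tester, then P has a (k−1, q·(1 + 2^{⌊q/k⌋}))-round-adaptive ε-tester; moreover, if the given tester is one-sided, so is the resulting tester. -/

import Mathlib

open scoped ENNReal BigOperators

namespace Adaptivity

/-- A deterministic `k`-round-adaptive query algorithm over domain `D` with answer
alphabet `R` and output type `O`: in each of the `k+1` rounds it chooses a query set
based on the partial view of the oracle obtained so far (which records exactly the
previously queried points and the answers received), and finally produces an output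
from the full view obtained. -/
structure DetAlg (D R O : Type) [DecidableEq D] (k : ℕ) where
  query : Fin (k + 1) → (D → Option R) → Finset D
  out : (D → Option R) → O

variable {D R O : Type} [DecidableEq D] {k : ℕ}

/-- The partial view of an oracle `f` on a set `Q` of already-queried points. -/
def view (f : D → R) (Q : Finset D) : D → Option R :=
  fun x => if x ∈ Q then some (f x) else none

/-- The set of points queried during the first `ℓ` rounds, when run on oracle `f`. -/
def DetAlg.seen (T : DetAlg D R O k) (f : D → R) : ℕ → Finset D
  | 0 => ∅
  | ℓ + 1 =>
      T.seen f ℓ ∪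
        (if h : ℓ < k + 1 then T.query ⟨ℓ, h⟩ (view f (T.seen f ℓ)) else ∅)

/-- The query set produced in round `ℓ` on oracle `f`. -/
def DetAlg.queries (T : DetAlg D R O k) (f : D → R) (ℓ : Fin (k + 1)) : Finset D :=
  T.query ℓ (view f (T.seen f ℓ.1))

/-- The total number of queries made on oracle `f`. -/
def DetAlg.totalQueries (T : DetAlg D R O k) (f : D → R) : ℕ :=
  ∑ ℓ : Fin (k + 1), (T.queries f ℓ).card

/-- The output of the algorithm on oracle `f`. -/
def DetAlg.run (T : DetAlg D R O k) (f : D → R) : O :=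
  T.out (view f (T.seen f (k + 1)))

/-- A randomized `k`-round-adaptive algorithm is a probability distribution (`PMF`) over
deterministic ones; `probOut A f p` is the probability that its output on oracle `f`
satisfies the predicate `p`. -/
noncomputable def probOut (A : PMF (DetAlg D R O k)) (f : D → R) (p : O → Prop) : ℝ≥0∞ :=
  A.toOuterMeasure {T | p (T.run f)}

/-- The randomized algorithm `A` makes at most `q` queries in total, on every oracle. -/
def queryBound (A : PMF (DetAlg D R O k)) (q : ℝ) : Prop :=
  ∀ T ∈ A.support, ∀ f : D → R, (T.totalQueries f : ℝ) ≤ q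

/-- Relative Hamming distance between two functions on a finite domain. -/
noncomputable def hamDist [Fintype D] (f g : D → R) : ℝ :=
  ({x : D | f x ≠ g x}.ncard : ℝ) / (Fintype.card D : ℝ)

/-- Relative Hamming distance from a function to a (nonempty) property. -/
noncomputable def distToProp [Fintype D] (f : D → R) (P : Set (D → R)) : ℝ :=
  sInf (hamDist f '' P)

/-- `A` is a `(k,q)`-round-adaptive `ε`-tester for the property `P`. -/
def IsTester [Fintype D] (q ε : ℝ) (P : Set (D → R))
    (A : PMF (DetAlg D R Bool k)) : Prop :=
  queryBound A q ∧
    (∀ f ∈ P, (2 : ℝ≥0∞) / 3 ≤ probOut A f (· = true)) ∧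
    (∀ f : D → R, ε < distToProp f P → (2 : ℝ≥0∞) / 3 ≤ probOut A f (· = false))

/-- `A` is a one-sided tester for `P`: it accepts every member of `P` with probability 1. -/
def OneSidedTester [Fintype D] (P : Set (D → R)) (A : PMF (DetAlg D R Bool k)) : Prop :=
  ∀ f ∈ P, probOut A f (· = true) = 1

end Adaptivity

/-!
Let `m = ⌊q/k⌋`. Since the `k + 1` rounds of a tester making at most `q` queries use at most `q`
queries in total, on every oracle one of the first `k` rounds, say round `p`, queries at most
`m` points. The reduced algorithm runs the original one, but in round `p` it asks, besides the
round-`p` queries, every query that round `p + 1` could make for any of the `2 ^ m` possible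
answers to round `p`; each of these sets has at most `q` points. The answers to round `p + 1`
are then already known, so the remaining rounds move down by one, and the output on every
oracle, hence the acceptance probabilities, are unchanged.
-/

open Finset

namespace Adaptivity

variable {D R O : Type} [DecidableEq D] {k : ℕ}

theorem view_congr {f g : D → R} {S : Finset D} (h : Set.EqOn f g S) : view f S = view g S := by
  funext x
  simp only [view]
  split_ifs with hx
  · rw [h hx]
  · rfl

namespace DetAlg

variable (T : DetAlg D R O k) (f : D → R) {g : D → R}

/-- The query set of round `ℓ`, indexed by a natural number; it is empty after the last round. -/
def roundQueries (ℓ : ℕ) : Finset D :=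
  if h : ℓ < k + 1 then T.queries f ⟨ℓ, h⟩ else ∅

theorem seen_succ (ℓ : ℕ) : T.seen f (ℓ + 1) = T.seen f ℓ ∪ T.roundQueries f ℓ := rfl

theorem seen_mono : Monotone (T.seen f) :=
  monotone_nat_of_le_succ fun ℓ => by
    rw [seen_succ]
    exact subset_union_left

variable {T f}

theorem roundQueries_congr {ℓ : ℕ} (h : view f (T.seen f ℓ) = view g (T.seen g ℓ)) :
    T.roundQueries f ℓ = T.roundQueries g ℓ := by
  simp only [roundQueries, queries, h]

theorem seen_eq_of_eqOn : ∀ {ℓ : ℕ}, Set.EqOn f g (T.seen f ℓ) → T.seen f ℓ = T.seen g ℓ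
  | 0, _ => rfl
  | ℓ + 1, h => by
    have hℓ := h.mono (T.seen_mono f ℓ.le_succ)
    have ih := seen_eq_of_eqOn hℓ
    rw [seen_succ, seen_succ, ih]
    congr 1
    exact roundQueries_congr (by rw [view_congr hℓ, ih])

theorem roundQueries_eq_of_eqOn {ℓ : ℕ} (h : Set.EqOn f g (T.seen f ℓ)) :
    T.roundQueries f ℓ = T.roundQueries g ℓ :=
  roundQueries_congr (by rw [view_congr h, seen_eq_of_eqOn h])

theorem run_eq_of_eqOn (h : Set.EqOn f g (T.seen f (k + 1))) : T.run f = T.run g := by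
  simp only [run]
  rw [view_congr h, seen_eq_of_eqOn h]

variable (T f)

theorem totalQueries_eq_sum_range :
    T.totalQueries f = ∑ ℓ ∈ range (k + 1), (T.roundQueries f ℓ).card := by
  rw [totalQueries, ← Fin.sum_univ_eq_sum_range]
  refine sum_congr rfl fun ℓ _ => ?_
  rw [roundQueries, dif_pos ℓ.isLt]

theorem sum_card_roundQueries_le (s : Finset ℕ) :
    ∑ ℓ ∈ s, (T.roundQueries f ℓ).card ≤ T.totalQueries f := by
  rw [totalQueries_eq_sum_range]
  refine sum_le_sum_of_ne_zero fun ℓ _ hℓ => mem_range.2 ?_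
  by_contra h
  simp [roundQueries, h] at hℓ

theorem card_roundQueries_le (ℓ : ℕ) : (T.roundQueries f ℓ).card ≤ T.totalQueries f := by
  simpa using T.sum_card_roundQueries_le f {ℓ}

theorem exists_card_roundQueries_le_div {n : ℕ} (hn : 0 < n) :
    ∃ ℓ < n, (T.roundQueries f ℓ).card ≤ T.totalQueries f / n := by
  have hsum : ∑ ℓ ∈ range n, (T.roundQueries f ℓ).card
      < ∑ _ℓ ∈ range n, (T.totalQueries f / n + 1) := by
    rw [sum_const, card_range, smul_eq_mul]
    exact (T.sum_card_roundQueries_le f _).trans_lt (Nat.lt_mul_div_succ _ hn)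
  obtain ⟨ℓ, hℓ, hcard⟩ := exists_lt_of_sum_lt hsum
  exact ⟨ℓ, mem_range.1 hℓ, Nat.lt_succ_iff.1 hcard⟩

end DetAlg

def complete [Inhabited R] (v : D → Option R) : D → R := fun x => (v x).getD default

theorem eqOn_complete_view [Inhabited R] (f : D → R) {S S' : Finset D} (h : S' ⊆ S) :
    Set.EqOn f (complete (view f S)) S' := fun x hx => by
  simp [complete, view, h (Finset.mem_coe.1 hx)]

def patch (f : D → Bool) (S s : Finset D) : D → Bool :=
  fun x => if x ∈ S then f x else decide (x ∈ s)

namespace DetAlg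

variable (T : DetAlg D Bool O k)

/-- A subset `s` of the round-`i` query set stands for the answer to round `i` that is `true`
exactly on `s`. -/
def mergeQueries (i : ℕ) (g : D → Bool) : Finset D :=
  T.roundQueries g i ∪ (T.roundQueries g i).powerset.biUnion fun s =>
    T.roundQueries (patch g (T.seen g i) s) (i + 1)

variable {T}

theorem roundQueries_succ_subset_mergeQueries {f g : D → Bool} {i : ℕ}
    (h : Set.EqOn f g (T.seen f i)) : T.roundQueries f (i + 1) ⊆ T.mergeQueries i g := by
  set s := (T.roundQueries f i).filter (f · = true)
  have hs : s ∈ (T.roundQueries g i).powerset := by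
    rw [← roundQueries_eq_of_eqOn h]
    exact mem_powerset.2 (filter_subset _ _)
  have hpatch : Set.EqOn f (patch g (T.seen g i) s) (T.seen f (i + 1)) := by
    intro x hx
    rw [mem_coe, seen_succ, mem_union] at hx
    simp only [patch, ← seen_eq_of_eqOn h]
    split_ifs with hxi
    · exact h hxi
    · simp [s, hx.resolve_left hxi]
  rw [roundQueries_eq_of_eqOn hpatch]
  exact (subset_biUnion_of_mem
    (fun t => T.roundQueries (patch g (T.seen g i) t) (i + 1)) hs).trans subset_union_right

theorem card_mergeQueries_le {q : ℕ} (hb : ∀ g, T.totalQueries g ≤ q) (i : ℕ) (g : D → Bool) :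
    (T.mergeQueries i g).card
      ≤ (T.roundQueries g i).card + 2 ^ (T.roundQueries g i).card * q :=
  calc (T.mergeQueries i g).card
      ≤ (T.roundQueries g i).card + ∑ s ∈ (T.roundQueries g i).powerset,
          (T.roundQueries (patch g (T.seen g i) s) (i + 1)).card :=
        (card_union_le _ _).trans (Nat.add_le_add_left card_biUnion_le _)
    _ ≤ (T.roundQueries g i).card + ∑ _s ∈ (T.roundQueries g i).powerset, q := by
        gcongr with s
        exact (T.card_roundQueries_le _ _).trans (hb _)
    _ = (T.roundQueries g i).card + 2 ^ (T.roundQueries g i).card * q := by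
        rw [sum_const, card_powerset, smul_eq_mul]

/-- Rounds before the first round whose query set has at most `m` points are copied, that round
is merged with the next one, and the later rounds move down by one. -/
def reducedQuery (T : DetAlg D Bool O (k + 1)) (m i : ℕ) (g : D → Bool) : Finset D :=
  if ∃ ℓ < i, (T.roundQueries g ℓ).card ≤ m then T.roundQueries g (i + 1)
  else if (T.roundQueries g i).card ≤ m then T.mergeQueries i g
  else T.roundQueries g i

/-- The reduced algorithm replays `T` on an arbitrary completion of its current view; this is
faithful because what `T` does in a round depends only on the answers it has already seen. -/
def reduceRound (T : DetAlg D Bool O (k + 1)) (m : ℕ) : DetAlg D Bool O k where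
  query i v := T.reducedQuery m i (complete v)
  out v := T.run (complete v)

theorem roundQueries_reduceRound (T : DetAlg D Bool O (k + 1)) (m : ℕ) (f : D → Bool) {i : ℕ}
    (hi : i < k + 1) :
    (T.reduceRound m).roundQueries f i
      = T.reducedQuery m i (complete (view f ((T.reduceRound m).seen f i))) := by
  rw [roundQueries, dif_pos hi]
  rfl

end DetAlg

/-- After its round `i`, the reduced algorithm has seen everything `T` sees before its round
`oldRound p i`. -/
def oldRound (p i : ℕ) : ℕ := if i ≤ p then i else i + 1

theorem oldRound_of_le {p i : ℕ} (h : i ≤ p) : oldRound p i = i := if_pos h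

theorem oldRound_of_lt {p i : ℕ} (h : p < i) : oldRound p i = i + 1 := if_neg h.not_ge

theorem oldRound_strictMono (p : ℕ) : StrictMono (oldRound p) :=
  strictMono_nat_of_lt_succ fun i => by unfold oldRound; split_ifs <;> omega

namespace DetAlg

section Simulation

variable {T : DetAlg D Bool O (k + 1)} {m p : ℕ} {f g : D → Bool}
  (hp : IsLeast {ℓ | (T.roundQueries f ℓ).card ≤ m} p)
include hp

theorem exists_lt_card_roundQueries_le_iff {i : ℕ}
    (h : ∀ ℓ < i, T.roundQueries g ℓ = T.roundQueries f ℓ) :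
    (∃ ℓ < i, (T.roundQueries g ℓ).card ≤ m) ↔ p < i := by
  constructor
  · rintro ⟨ℓ, hℓ, hcard⟩
    exact (hp.2 (show (T.roundQueries f ℓ).card ≤ m from h ℓ hℓ ▸ hcard)).trans_lt hℓ
  · intro hpi
    exact ⟨p, hpi, (h p hpi).symm ▸ hp.1⟩

theorem reducedQuery_of_ne {i : ℕ} (hi : i ≠ p) (h : Set.EqOn f g (T.seen f (oldRound p i))) :
    T.reducedQuery m i g = T.roundQueries f (oldRound p i) := by
  have hQ : ∀ ℓ ≤ oldRound p i, T.roundQueries g ℓ = T.roundQueries f ℓ := fun ℓ hℓ =>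
    (roundQueries_eq_of_eqOn (h.mono (T.seen_mono f hℓ))).symm
  have hlt : ∀ ℓ < i, T.roundQueries g ℓ = T.roundQueries f ℓ := fun ℓ hℓ =>
    hQ ℓ (by unfold oldRound; split_ifs <;> omega)
  simp only [reducedQuery, exists_lt_card_roundQueries_le_iff hp hlt]
  rcases hi.lt_or_gt with hip | hip
  · have hlarge : ¬ (T.roundQueries f i).card ≤ m := fun hc => (hp.2 hc).not_gt hip
    rw [oldRound_of_le hip.le] at hQ ⊢
    rw [if_neg hip.not_gt, hQ i le_rfl, if_neg hlarge]
  · rw [oldRound_of_lt hip] at hQ ⊢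
    rw [if_pos hip, hQ (i + 1) le_rfl]

theorem reducedQuery_self (h : Set.EqOn f g (T.seen f p)) :
    T.reducedQuery m p g = T.mergeQueries p g := by
  have hQ : ∀ ℓ ≤ p, T.roundQueries g ℓ = T.roundQueries f ℓ := fun ℓ hℓ =>
    (roundQueries_eq_of_eqOn (h.mono (T.seen_mono f hℓ))).symm
  simp only [reducedQuery, exists_lt_card_roundQueries_le_iff hp fun ℓ hℓ => hQ ℓ hℓ.le,
    lt_irrefl, if_false, hQ p le_rfl]
  exact if_pos hp.1

theorem seen_oldRound_succ_subset {i : ℕ} (h : Set.EqOn f g (T.seen f (oldRound p i))) :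
    T.seen f (oldRound p (i + 1)) ⊆ T.seen f (oldRound p i) ∪ T.reducedQuery m i g := by
  rcases lt_trichotomy i p with hip | rfl | hip
  · rw [reducedQuery_of_ne hp hip.ne h, oldRound_of_le hip.le, oldRound_of_le hip, seen_succ]
  · rw [oldRound_of_le le_rfl] at h ⊢
    rw [oldRound_of_lt (Nat.lt_succ_self i), reducedQuery_self hp h, seen_succ, seen_succ,
      union_assoc]
    refine union_subset_union_right (union_subset ?_ (roundQueries_succ_subset_mergeQueries h))
    rw [roundQueries_eq_of_eqOn h]
    exact subset_union_left
  · rw [reducedQuery_of_ne hp hip.ne' h, oldRound_of_lt hip,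
      oldRound_of_lt (hip.trans i.lt_succ_self), seen_succ]

theorem card_reducedQuery_le {q i : ℕ} (hb : ∀ g, T.totalQueries g ≤ q)
    (h : Set.EqOn f g (T.seen f (oldRound p i))) :
    (T.reducedQuery m i g).card
      ≤ (T.roundQueries f (oldRound p i)).card + if i = p then 2 ^ m * q else 0 := by
  by_cases hi : i = p
  · subst hi
    rw [oldRound_of_le le_rfl] at h ⊢
    have hQ := roundQueries_eq_of_eqOn h
    rw [reducedQuery_self hp h, if_pos rfl]
    calc (T.mergeQueries i g).card
        ≤ (T.roundQueries g i).card + 2 ^ (T.roundQueries g i).card * q :=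
          card_mergeQueries_le hb i g
      _ ≤ (T.roundQueries f i).card + 2 ^ m * q := by
          rw [← hQ]
          gcongr
          · norm_num
          · exact hp.1
  · rw [reducedQuery_of_ne hp hi h, if_neg hi, add_zero]

theorem seen_oldRound_subset_seen_reduceRound :
    ∀ i ≤ k + 1, T.seen f (oldRound p i) ⊆ (T.reduceRound m).seen f i
  | 0, _ => by simp [oldRound_of_le (Nat.zero_le p), seen]
  | i + 1, hi => by
    have ih := seen_oldRound_subset_seen_reduceRound i (by omega)
    rw [seen_succ, roundQueries_reduceRound T m f (by omega)]
    exact (seen_oldRound_succ_subset hp (eqOn_complete_view f ih)).trans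
      (union_subset_union_left ih)

theorem run_reduceRound_of_isLeast (hpk : p ≤ k) : (T.reduceRound m).run f = T.run f := by
  have hseen := seen_oldRound_subset_seen_reduceRound hp (k + 1) le_rfl
  rw [oldRound_of_lt (by omega)] at hseen
  exact (run_eq_of_eqOn (eqOn_complete_view f hseen)).symm

theorem totalQueries_reduceRound_le_of_isLeast {q : ℕ} (hpk : p ≤ k)
    (hb : ∀ g, T.totalQueries g ≤ q) : (T.reduceRound m).totalQueries f ≤ q + 2 ^ m * q := by
  have hinj : Set.InjOn (oldRound p) (range (k + 1)) := (oldRound_strictMono p).injective.injOn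
  calc (T.reduceRound m).totalQueries f
      = ∑ i ∈ range (k + 1),
          (T.reducedQuery m i (complete (view f ((T.reduceRound m).seen f i)))).card := by
        rw [totalQueries_eq_sum_range]
        exact sum_congr rfl fun i hi => by rw [roundQueries_reduceRound T m f (mem_range.1 hi)]
    _ ≤ ∑ i ∈ range (k + 1),
          ((T.roundQueries f (oldRound p i)).card + if i = p then 2 ^ m * q else 0) :=
        sum_le_sum fun i hi => card_reducedQuery_le hp hb (eqOn_complete_view f
          (seen_oldRound_subset_seen_reduceRound hp i (by simp at hi; omega)))
    _ = ∑ ℓ ∈ (range (k + 1)).image (oldRound p), (T.roundQueries f ℓ).card + 2 ^ m * q := by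
        rw [sum_add_distrib, sum_image hinj, sum_ite_eq' (range (k + 1)) p,
          if_pos (mem_range.2 (by omega))]
    _ ≤ q + 2 ^ m * q := by
        gcongr
        exact (T.sum_card_roundQueries_le f _).trans (hb f)

end Simulation

theorem exists_isLeast_card_roundQueries_le (T : DetAlg D R O (k + 1)) (f : D → R) {q : ℕ}
    (hb : T.totalQueries f ≤ q) :
    ∃ p ≤ k, IsLeast {ℓ | (T.roundQueries f ℓ).card ≤ q / (k + 1)} p := by
  obtain ⟨ℓ, hℓ, hcard⟩ := T.exists_card_roundQueries_le_div f k.succ_pos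
  have hcard' := hcard.trans (Nat.div_le_div_right hb)
  have hS : ∃ ℓ, (T.roundQueries f ℓ).card ≤ q / (k + 1) := ⟨ℓ, hcard'⟩
  exact ⟨Nat.find hS, (Nat.find_min' hS hcard').trans (Nat.lt_succ_iff.1 hℓ),
    Nat.isLeast_find hS⟩

variable {T : DetAlg D Bool O (k + 1)} {q : ℕ}

theorem run_reduceRound (hb : ∀ g, T.totalQueries g ≤ q) (f : D → Bool) :
    (T.reduceRound (q / (k + 1))).run f = T.run f := by
  obtain ⟨p, hpk, hp⟩ := T.exists_isLeast_card_roundQueries_le f (hb f)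
  exact run_reduceRound_of_isLeast hp hpk

theorem totalQueries_reduceRound_le (hb : ∀ g, T.totalQueries g ≤ q) (f : D → Bool) :
    (T.reduceRound (q / (k + 1))).totalQueries f ≤ q * (1 + 2 ^ (q / (k + 1))) := by
  obtain ⟨p, hpk, hp⟩ := T.exists_isLeast_card_roundQueries_le f (hb f)
  calc _ ≤ q + 2 ^ (q / (k + 1)) * q := totalQueries_reduceRound_le_of_isLeast hp hpk hb
    _ = q * (1 + 2 ^ (q / (k + 1))) := by ring

end DetAlg

theorem probOut_map_of_run_eq {k' : ℕ} {A : PMF (DetAlg D R O k)}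
    {φ : DetAlg D R O k → DetAlg D R O k'} {f : D → R}
    (h : ∀ T ∈ A.support, (φ T).run f = T.run f) (p : O → Prop) :
    probOut (A.map φ) f p = probOut A f p := by
  rw [probOut, probOut, PMF.toOuterMeasure_map_apply]
  refine A.toOuterMeasure_apply_eq_of_inter_support_eq (Set.ext fun T => ?_)
  simp only [Set.mem_inter_iff, Set.mem_preimage, Set.mem_ofPred_eq]
  exact and_congr_left fun hT => by rw [h T hT]

end Adaptivity

open Adaptivity in
theorem round_reduction_general {D : Type} [Fintype D] [DecidableEq D]
    (P : Set (D → Bool)) (k q : ℕ) (hk : 1 ≤ k)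
    (ε : ℝ)
    (A : PMF (DetAlg D Bool Bool k)) (hA : IsTester (q : ℝ) ε P A) :
    ∃ A' : PMF (DetAlg D Bool Bool (k - 1)),
      IsTester ((q * (1 + 2 ^ (q / k)) : ℕ) : ℝ) ε P A' ∧
        (OneSidedTester P A → OneSidedTester P A') := by
  obtain ⟨k, rfl⟩ : ∃ k', k = k' + 1 := ⟨k - 1, by omega⟩
  obtain ⟨hbound, haccept, hreject⟩ := hA
  have hb : ∀ T ∈ A.support, ∀ g, T.totalQueries g ≤ q := fun T hT g => by
    exact_mod_cast hbound T hT g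
  have hprob (f : D → Bool) (p : Bool → Prop) :
      probOut (A.map (·.reduceRound (q / (k + 1)))) f p = probOut A f p :=
    probOut_map_of_run_eq (fun T hT => DetAlg.run_reduceRound (hb T hT) f) p
  refine ⟨A.map (·.reduceRound (q / (k + 1))), ⟨?_, fun f hf => ?_, fun f hf => ?_⟩,
    fun hA f hf => ?_⟩
  · rw [queryBound, PMF.support_map]
    rintro _ ⟨T, hT, rfl⟩ g
    exact_mod_cast DetAlg.totalQueries_reduceRound_le (hb T hT) g
  · exact (hprob f _).symm ▸ haccept f hf
  · exact (hprob f _).symm ▸ hreject f hf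
  · exact (hprob f _).trans (hA f hf)

open Adaptivity in
/-- round reduction. For `k ≥ 1` and `q ≥ 1`, any
`(k,q)`-round-adaptive `ε`-tester for a nonempty property of Boolean functions can be
simulated by a `(k−1, q·(1 + 2^{⌊q/k⌋}))`-round-adaptive `ε`-tester; one-sidedness is
preserved. -/
theorem round_reduction {D : Type} [Fintype D] [DecidableEq D]
    (P : Set (D → Bool)) (hP : P.Nonempty) (k q : ℕ) (hk : 1 ≤ k) (hq : 1 ≤ q)
    (ε : ℝ) (hε0 : 0 < ε) (hε1 : ε ≤ 1)
    (A : PMF (DetAlg D Bool Bool k)) (hA : IsTester (q : ℝ) ε P A) :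
    ∃ A' : PMF (DetAlg D Bool Bool (k - 1)),
      IsTester ((q * (1 + 2 ^ (q / k)) : ℕ) : ℝ) ε P A' ∧
        (OneSidedTester P A → OneSidedTester P A') :=
  round_reduction_general P k q hk ε A hA
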